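/- One-step progress bound: in a normalized polymatrix game with δ ∈ (0, 0.5] and ε = δ/(δ+2), for any profiles x, x', writing f_new = f(x + ε(x'−x)), f = f(x), and D = max_i Df_i^δ(x, x'), we have f_new − f ≤ ε(D − f) + ε²(1 − D). -/

import Mathlib

open Finset
open scoped Classical

noncomputable section

/-- maximum of `v` over a finset `S` (junk value `0` if `S` is empty). -/
noncomputable def finMaxOn {α : Type*} (S : Finset α) (v : α → ℝ) : ℝ :=
  if h : S.Nonempty then S.sup' h v else 0

/-- minimum of `v` over a finset `S` (junk value `0` if `S` is empty). -/
noncomputable def finMinOn {α : Type*} (S : Finset α) (v : α → ℝ) : ℝ :=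
  if h : S.Nonempty then S.inf' h v else 0

section Polymatrix

variable {n : ℕ} (m : Fin n → ℕ) (N : Fin n → Finset (Fin n))
  (A : ∀ i j : Fin n, Matrix (Fin (m i)) (Fin (m j)) ℝ)

/-- vector of pure-strategy payoffs of player `i` against profile `x`:
`u_i^s(x) = Σ_{j ∈ N(i)} A_ij x_j`. -/
def usVec (i : Fin n) (x : ∀ j, Fin (m j) → ℝ) : Fin (m i) → ℝ :=
  fun k => ∑ j ∈ N i, ∑ q, A i j k q * x j q

/-- payoff to player `i` from playing the (possibly formal) strategy `y`
against profile `x`: `u_i(y, x) = yᵀ u_i^s(x)`. -/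
def payTo (i : Fin n) (y : Fin (m i) → ℝ) (x : ∀ j, Fin (m j) → ℝ) : ℝ :=
  ∑ k, y k * usVec m N A i x k

/-- payoff of player `i` under profile `x`. -/
def payoff (i : Fin n) (x : ∀ j, Fin (m j) → ℝ) : ℝ := payTo m N A i (x i) x

/-- best-response payoff of player `i` against `x`. -/
def brp (i : Fin n) (x : ∀ j, Fin (m j) → ℝ) : ℝ := finMaxOn univ (usVec m N A i x)

/-- pure best responses of player `i` against `x`. -/
def brSet (i : Fin n) (x : ∀ j, Fin (m j) → ℝ) : Finset (Fin (m i)) :=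
  univ.filter fun k => ∀ l, usVec m N A i x l ≤ usVec m N A i x k

/-- `δ`-best responses of player `i` against `x`. -/
def brdSet (δ : ℝ) (i : Fin n) (x : ∀ j, Fin (m j) → ℝ) : Finset (Fin (m i)) :=
  univ.filter fun k => brp m N A i x - δ ≤ usVec m N A i x k

/-- regret of player `i` under `x`: `f_i(x)`. -/
def regret (i : Fin n) (x : ∀ j, Fin (m j) → ℝ) : ℝ :=
  brp m N A i x - payoff m N A i x

/-- maximum regret `f(x) = max_i f_i(x)`. -/
def maxRegret (x : ∀ j, Fin (m j) → ℝ) : ℝ := finMaxOn univ fun i => regret m N A i x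

/-- set of players with maximum regret `K(x)`. -/
def Kset (x : ∀ j, Fin (m j) → ℝ) : Finset (Fin n) :=
  univ.filter fun i => regret m N A i x = maxRegret m N A x

/-- `Df_i^δ(x, x')`. -/
def Dfd (δ : ℝ) (i : Fin n) (x x' : ∀ j, Fin (m j) → ℝ) : ℝ :=
  finMaxOn (brdSet m N A δ i x) (usVec m N A i x')
    - payTo m N A i (x i) x' - payTo m N A i (x' i) x + payTo m N A i (x i) x

/-- `Df^δ(x, x') = max_{i ∈ K(x)} Df_i^δ(x, x') - f(x)`. -/
def DfdAll (δ : ℝ) (x x' : ∀ j, Fin (m j) → ℝ) : ℝ :=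
  finMaxOn (Kset m N A x) (fun i => Dfd m N A δ i x x') - maxRegret m N A x

/-- `Df_i(x, x')` (with exact best responses). -/
def Dfbr (i : Fin n) (x x' : ∀ j, Fin (m j) → ℝ) : ℝ :=
  finMaxOn (brSet m N A i x) (usVec m N A i x')
    - payTo m N A i (x i) x' - payTo m N A i (x' i) x + payTo m N A i (x i) x

/-- the profile `(1-ε)x + εx'`. -/
def mix (x x' : ∀ j, Fin (m j) → ℝ) (ε : ℝ) : ∀ j, Fin (m j) → ℝ :=
  fun j => (1 - ε) • x j + ε • x' j

/-- `Λ_i^δ(x, x', ε)`; if the complement of the `δ`-best-response set is empty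
the inner maximum is `-∞`, i.e. `Λ_i^δ = 0`. -/
def Lamd (δ : ℝ) (i : Fin n) (x x' : ∀ j, Fin (m j) → ℝ) (ε : ℝ) : ℝ :=
  if _h : ((brdSet m N A δ i x)ᶜ).Nonempty then
    max 0 (finMaxOn (brdSet m N A δ i x)ᶜ (usVec m N A i (mix m x x' ε))
         - finMaxOn (brdSet m N A δ i x) (usVec m N A i (mix m x x' ε)))
  else 0

/-- `Λ_i(x, x', ε)` (with exact best responses). -/
def LamBr (i : Fin n) (x x' : ∀ j, Fin (m j) → ℝ) (ε : ℝ) : ℝ :=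
  if _h : ((brSet m N A i x)ᶜ).Nonempty then
    max 0 (finMaxOn (brSet m N A i x)ᶜ (usVec m N A i (mix m x x' ε))
         - finMaxOn (brSet m N A i x) (usVec m N A i (mix m x x' ε)))
  else 0

/-- `x` is a mixed strategy profile. -/
def isProfile (x : ∀ j, Fin (m j) → ℝ) : Prop :=
  ∀ j, x j ∈ stdSimplex ℝ (Fin (m j))

/-- the game is normalized: all pure-strategy payoffs of every player lie in
`[0,1]` against every mixed profile. -/
def normalized : Prop :=
  ∀ i (x : ∀ j, Fin (m j) → ℝ), isProfile m x →
    ∀ k, usVec m N A i x k ∈ Set.Icc (0:ℝ) 1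

/-! Let `M_i` be the best payoff against `x'` among the `δ`-best responses of player `i` to `x`.
The step `ε = δ / (δ + 2)` satisfies `ε ≤ (1 - ε) δ`, so no other pure strategy can overtake them:
the best-response payoff at `x_ε = (1 - ε) x + ε x'` is at most `(1 - ε) max u_i^s(x) + ε M_i`.
Expanding the bilinear payoff `u_i(x_ε, x_ε)` then gives
`f_i(x_ε) ≤ (1 - ε) f_i(x) + ε (1 - ε) Df_i^δ(x, x') + ε² (M_i - u_i(x'))`, and the last bracket
is at most `1` by normalization. Maximizing over players, `(1 - ε) f + ε (1 - ε) D + ε²` is the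
claimed bound. -/

lemma le_finMaxOn {α : Type*} {S : Finset α} {v : α → ℝ} {a : α} (ha : a ∈ S) :
    v a ≤ finMaxOn S v := by
  rw [finMaxOn, dif_pos ⟨a, ha⟩]
  exact le_sup' v ha

lemma finMaxOn_le {α : Type*} {S : Finset α} {v : α → ℝ} {c : ℝ} (hS : S.Nonempty)
    (h : ∀ a ∈ S, v a ≤ c) : finMaxOn S v ≤ c := by
  rw [finMaxOn, dif_pos hS]
  exact sup'_le hS v h

lemma exists_eq_finMaxOn {α : Type*} {S : Finset α} (v : α → ℝ) (hS : S.Nonempty) :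
    ∃ a ∈ S, finMaxOn S v = v a := by
  rw [finMaxOn, dif_pos hS]
  exact exists_mem_eq_sup' hS v

lemma isProfile.univ_nonempty {x : ∀ j, Fin (m j) → ℝ} (hx : isProfile m x) (i : Fin n) :
    (univ : Finset (Fin (m i))).Nonempty :=
  nonempty_of_sum_ne_zero ((hx i).2.symm ▸ one_ne_zero)

lemma usVec_mix (i : Fin n) (x x' : ∀ j, Fin (m j) → ℝ) (ε : ℝ) (k : Fin (m i)) :
    usVec m N A i (mix m x x' ε) k
      = (1 - ε) * usVec m N A i x k + ε * usVec m N A i x' k := by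
  simp only [usVec, mix, Pi.add_apply, Pi.smul_apply, smul_eq_mul, mul_sum, ← sum_add_distrib]
  exact sum_congr rfl fun j _ => sum_congr rfl fun q _ => by ring

lemma payTo_mix_right (i : Fin n) (y : Fin (m i) → ℝ) (x x' : ∀ j, Fin (m j) → ℝ) (ε : ℝ) :
    payTo m N A i y (mix m x x' ε)
      = (1 - ε) * payTo m N A i y x + ε * payTo m N A i y x' := by
  simp only [payTo, usVec_mix, mul_sum, ← sum_add_distrib]
  exact sum_congr rfl fun k _ => by ring

lemma payTo_mix_left (i : Fin n) (x x' z : ∀ j, Fin (m j) → ℝ) (ε : ℝ) :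
    payTo m N A i (mix m x x' ε i) z
      = (1 - ε) * payTo m N A i (x i) z + ε * payTo m N A i (x' i) z := by
  simp only [payTo, mix, Pi.add_apply, Pi.smul_apply, smul_eq_mul, mul_sum, ← sum_add_distrib]
  exact sum_congr rfl fun k _ => by ring

lemma payoff_mix (i : Fin n) (x x' : ∀ j, Fin (m j) → ℝ) (ε : ℝ) :
    payoff m N A i (mix m x x' ε)
      = (1 - ε) ^ 2 * payoff m N A i x
        + ε * (1 - ε) * (payTo m N A i (x i) x' + payTo m N A i (x' i) x)
        + ε ^ 2 * payoff m N A i x' := by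
  rw [payoff, payTo_mix_left, payTo_mix_right, payTo_mix_right, payoff, payoff]
  ring

lemma brdSet_nonempty {δ : ℝ} (hδ : 0 ≤ δ) (i : Fin n) {x : ∀ j, Fin (m j) → ℝ}
    (hne : (univ : Finset (Fin (m i))).Nonempty) : (brdSet m N A δ i x).Nonempty := by
  obtain ⟨k, -, hk⟩ := exists_eq_finMaxOn (usVec m N A i x) hne
  exact ⟨k, mem_filter.2 ⟨mem_univ k, by rw [brp, hk]; linarith⟩⟩

/-- A pure strategy outside the `δ`-best responses to `x` loses at least `(1 - ε) δ ≥ ε` against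
`x`, more than it can gain against `x'`. -/
lemma brp_mix_le {δ ε : ℝ} (hδ : 0 ≤ δ) (hε0 : 0 ≤ ε) (hε1 : ε ≤ 1) (hεδ : ε ≤ (1 - ε) * δ)
    (i : Fin n) {x x' : ∀ j, Fin (m j) → ℝ} (hne : (univ : Finset (Fin (m i))).Nonempty)
    (hu : ∀ k, usVec m N A i x' k ∈ Set.Icc (0 : ℝ) 1) :
    brp m N A i (mix m x x' ε)
      ≤ (1 - ε) * brp m N A i x + ε * finMaxOn (brdSet m N A δ i x) (usVec m N A i x') := by
  obtain ⟨k₀, hk₀⟩ := brdSet_nonempty m N A hδ i (x := x) hne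
  have hM : 0 ≤ finMaxOn (brdSet m N A δ i x) (usVec m N A i x') :=
    (hu k₀).1.trans (le_finMaxOn hk₀)
  refine finMaxOn_le hne fun k _ => ?_
  have hx : usVec m N A i x k ≤ brp m N A i x := le_finMaxOn (mem_univ k)
  rw [usVec_mix]
  by_cases hk : k ∈ brdSet m N A δ i x
  · gcongr
    exact le_finMaxOn hk
  · have hlow : usVec m N A i x k < brp m N A i x - δ := by
      simp only [brdSet, mem_filter, mem_univ, true_and, not_le] at hk
      linarith
    nlinarith [(hu k).2]

lemma regret_mix_le {δ ε : ℝ} (hδ : 0 ≤ δ) (hε0 : 0 ≤ ε) (hε1 : ε ≤ 1)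
    (hεδ : ε ≤ (1 - ε) * δ) (i : Fin n) {x x' : ∀ j, Fin (m j) → ℝ}
    (hne : (univ : Finset (Fin (m i))).Nonempty)
    (hu : ∀ k, usVec m N A i x' k ∈ Set.Icc (0 : ℝ) 1) :
    regret m N A i (mix m x x' ε)
      ≤ (1 - ε) * regret m N A i x + ε * (1 - ε) * Dfd m N A δ i x x'
        + ε ^ 2 * (finMaxOn (brdSet m N A δ i x) (usVec m N A i x') - payoff m N A i x') := by
  have := brp_mix_le m N A hδ hε0 hε1 hεδ i hne hu (x := x)
  rw [regret, payoff_mix, regret, Dfd, payoff]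
  linarith

lemma finMaxOn_brdSet_sub_payoff_le_one {δ : ℝ} (i : Fin n) {x x' : ∀ j, Fin (m j) → ℝ}
    (hx' : x' i ∈ stdSimplex ℝ (Fin (m i)))
    (hu : ∀ k, usVec m N A i x' k ∈ Set.Icc (0 : ℝ) 1) :
    finMaxOn (brdSet m N A δ i x) (usVec m N A i x') - payoff m N A i x' ≤ 1 := by
  have hpay : 0 ≤ payoff m N A i x' :=
    sum_nonneg (s := univ) fun k _ => mul_nonneg (hx'.1 k) (hu k).1
  have hM : finMaxOn (brdSet m N A δ i x) (usVec m N A i x') ≤ 1 := by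
    unfold finMaxOn
    split_ifs with h
    · exact sup'_le h _ fun k _ => (hu k).2
    · exact zero_le_one
  linarith

lemma div_add_two_le_one_sub_div_add_two_mul {δ : ℝ} (hδ : 0 ≤ δ) :
    δ / (δ + 2) ≤ (1 - δ / (δ + 2)) * δ := by
  rw [one_sub_div (by linarith), div_mul_eq_mul_div, div_le_div_iff_of_pos_right (by linarith)]
  nlinarith

theorem stmt8 (hn : 0 < n) (hnorm : normalized m N A)
    (δ : ℝ) (hδ : 0 < δ)
    (x x' : ∀ j, Fin (m j) → ℝ) (hx : isProfile m x) (hx' : isProfile m x') :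
    maxRegret m N A (mix m x x' (δ / (δ + 2))) - maxRegret m N A x
      ≤ (δ / (δ + 2)) * (finMaxOn univ (fun i => Dfd m N A δ i x x')
            - maxRegret m N A x)
        + (δ / (δ + 2)) ^ 2
            * (1 - finMaxOn univ (fun i => Dfd m N A δ i x x')) := by
  set ε := δ / (δ + 2)
  set f := maxRegret m N A x
  set D := finMaxOn univ (fun i => Dfd m N A δ i x x')
  have hε0 : 0 ≤ ε := by positivity
  have hε1 : ε ≤ 1 := (div_le_one (by linarith)).2 (by linarith)
  have hεδ : ε ≤ (1 - ε) * δ := div_add_two_le_one_sub_div_add_two_mul hδ.le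
  have hplayer : ∀ i, regret m N A i (mix m x x' ε) ≤ (1 - ε) * f + ε * (1 - ε) * D + ε ^ 2 := by
    intro i
    have hu := hnorm i x' hx'
    calc regret m N A i (mix m x x' ε)
        ≤ (1 - ε) * regret m N A i x + ε * (1 - ε) * Dfd m N A δ i x x'
          + ε ^ 2 * (finMaxOn (brdSet m N A δ i x) (usVec m N A i x') - payoff m N A i x') :=
          regret_mix_le m N A hδ.le hε0 hε1 hεδ i (hx.univ_nonempty m i) hu
      _ ≤ (1 - ε) * f + ε * (1 - ε) * D + ε ^ 2 * 1 := by
          have hε1' : 0 ≤ 1 - ε := by linarith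
          gcongr
          · exact le_finMaxOn (v := fun i => regret m N A i x) (mem_univ i)
          · exact le_finMaxOn (v := fun i => Dfd m N A δ i x x') (mem_univ i)
          · exact finMaxOn_brdSet_sub_payoff_le_one m N A i (hx' i) hu
      _ = (1 - ε) * f + ε * (1 - ε) * D + ε ^ 2 := by ring
  have hnew : maxRegret m N A (mix m x x' ε) ≤ (1 - ε) * f + ε * (1 - ε) * D + ε ^ 2 :=
    finMaxOn_le ⟨⟨0, hn⟩, mem_univ _⟩ fun i _ => hplayer i
  linarith

end Polymatrix
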